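/- arXiv:1801.08733 — 5 statements merged into one kernel-verified Lean document; each statement's English description precedes it below -/
import Mathlib

section
/- Let n be a positive integer. Every positive integer m ≤ n can be written as m = u·v with positive integers u, v such that one of the following holds: (i) u is a prime and u > n^{2/3}; or (ii) u ≤ n^{2/3}, v ≤ n^{2/3}, and 2Ω(u) − 2 ≤ Ω(v). -/
/-!
Write `R = n^{1/3}`, so `m ≤ R³`. If some prime factor of `m` exceeds `R²`, take it as `u`.
Otherwise list the prime factors of `m` in decreasing order and let `u` be the shortest prefix
product with `m ≤ R² u`; then `v = m / u ≤ R²`. If `u = a c` with `c` its last (smallest) prime,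
minimality gives `R² a < m ≤ R³`, so `c^{Ω(u) - 1} ≤ a < R`, whence `u ≤ R²`; and
`c^{Ω(v) + 1} ≥ c v = m / a > R² > c^{2(Ω(u) - 1)}`, which is the inequality between the `Ω`s.
-/

open List

theorem Nat.length_primeFactorsList_prod {L : List ℕ} (hL : ∀ p ∈ L, p.Prime) :
    L.prod.primeFactorsList.length = L.length :=
  (Nat.primeFactorsList_unique rfl hL).length_eq.symm

def IsBalancedSplit (R : ℝ) (L₁ L₂ : List ℕ) : Prop :=
  (L₁.prod : ℝ) ≤ R ^ 2 ∧ (L₂.prod : ℝ) ≤ R ^ 2 ∧ 2 * L₁.length ≤ L₂.length + 2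

section DescendingSplit

variable {A B : List ℕ} {c : ℕ} {R : ℝ}

theorem two_mul_length_lt_of_prod_bounds (hA : ∀ x ∈ A, c ≤ x) (hB : ∀ y ∈ B, y ≤ c)
    (hAR : (A.prod : ℝ) < R) (hBR : R ^ 2 < c * B.prod) : 2 * A.length < B.length + 1 := by
  have hpowA : (c : ℝ) ^ A.length ≤ A.prod := by exact_mod_cast A.pow_card_le_prod c hA
  have hpowB : (c * B.prod : ℝ) ≤ c ^ (B.length + 1) := by
    exact_mod_cast (c :: B).prod_le_pow_card c (by simpa using hB)
  have hlt : c ^ (2 * A.length) < c ^ (B.length + 1) := by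
    have : (c : ℝ) ^ (2 * A.length) < c ^ (B.length + 1) := calc
      (c : ℝ) ^ (2 * A.length) = (c ^ A.length) ^ 2 := by ring
      _ < R ^ 2 := pow_lt_pow_left₀ (hpowA.trans_lt hAR) (by positivity) two_ne_zero
      _ < _ := hBR.trans_le hpowB
    exact_mod_cast this
  have hc : 1 < c := by
    by_contra! hc
    interval_cases c <;> simp at hlt
  exact (Nat.pow_lt_pow_iff_right hc).mp hlt

theorem prod_mul_le_sq (hA : ∀ x ∈ A, c ≤ x) (hAR : (A.prod : ℝ) < R) (hcR : (c : ℝ) ≤ R ^ 2) :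
    (A.prod * c : ℝ) ≤ R ^ 2 := by
  rcases eq_or_ne A [] with rfl | hne
  · simpa using hcR
  · have hcA : (c : ℝ) ≤ A.prod := by
      exact_mod_cast (Nat.le_self_pow (length_pos_iff.2 hne).ne' c).trans (A.pow_card_le_prod c hA)
    have hA0 : (0 : ℝ) ≤ A.prod := by positivity
    nlinarith

theorem isBalancedSplit_of_minimal_prefix (hpos : ∀ x ∈ A ++ c :: B, 0 < x)
    (hsorted : (A ++ c :: B).Pairwise (· ≥ ·)) (hprod : ((A ++ c :: B).prod : ℝ) ≤ R ^ 3)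
    (hcR : (c : ℝ) ≤ R ^ 2) (hmin : R ^ 2 * A.prod < (A ++ c :: B).prod)
    (hfit : ((A ++ c :: B).prod : ℝ) ≤ R ^ 2 * (A ++ [c]).prod) :
    IsBalancedSplit R (A ++ [c]) B := by
  have hAc : ∀ x ∈ A, c ≤ x := fun x hx => (pairwise_append.1 hsorted).2.2 x hx c mem_cons_self
  have hcB : ∀ y ∈ B, y ≤ c := (pairwise_cons.1 (pairwise_append.1 hsorted).2.1).1
  have ha : (0 : ℝ) < A.prod := by
    exact_mod_cast prod_pos fun x hx => hpos x (mem_append_left _ hx)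
  have hc : (0 : ℝ) < c := by exact_mod_cast hpos c (by simp)
  simp only [IsBalancedSplit, prod_append, prod_cons, prod_nil, mul_one, Nat.cast_mul]
    at hprod hmin hfit ⊢
  have hAR : (A.prod : ℝ) < R :=
    lt_of_mul_lt_mul_left (by linarith : R ^ 2 * A.prod < R ^ 2 * R) (sq_nonneg R)
  have hBR : R ^ 2 < c * B.prod := lt_of_mul_lt_mul_left (by linarith) ha.le
  have hB : (B.prod : ℝ) ≤ R ^ 2 :=
    le_of_mul_le_mul_left (by linarith : A.prod * c * B.prod ≤ A.prod * c * R ^ 2) (by positivity)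
  have hcount := two_mul_length_lt_of_prod_bounds hAc hcB hAR hBR
  exact ⟨prod_mul_le_sq hAc hAR hcR, hB, by rw [length_append, length_singleton]; omega⟩

end DescendingSplit

theorem exists_isBalancedSplit {L : List ℕ} {R : ℝ} (hR : 1 ≤ R) (hpos : ∀ x ∈ L, 0 < x)
    (hsorted : L.Pairwise (· ≥ ·)) (hprod : (L.prod : ℝ) ≤ R ^ 3)
    (hsmall : ∀ x ∈ L, (x : ℝ) ≤ R ^ 2) : ∃ L₁ L₂, L = L₁ ++ L₂ ∧ IsBalancedSplit R L₁ L₂ := by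
  classical
  have hR2 : 1 ≤ R ^ 2 := one_le_pow₀ hR
  have hall : (L.prod : ℝ) ≤ R ^ 2 * (L.take L.length).prod := by
    rw [take_length]; nlinarith [Nat.cast_nonneg (α := ℝ) L.prod]
  have hex : ∃ j, (L.prod : ℝ) ≤ R ^ 2 * (L.take j).prod := ⟨_, hall⟩
  have hfit := Nat.find_spec hex
  have hj_le := Nat.find_min' hex hall
  rcases hj : Nat.find hex with _ | i
  · rw [hj, take_zero, prod_nil, Nat.cast_one, mul_one] at hfit
    exact ⟨[], L, rfl, by simpa using hR2, hfit, by simp⟩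
  · have hi : i < L.length := by omega
    have hmin : R ^ 2 * (L.take i).prod < L.prod := not_le.1 (Nat.find_min hex (by omega))
    rw [hj, ← take_append_getElem hi] at hfit
    have hL : L = L.take i ++ L[i] :: L.drop (i + 1) := by
      rw [← drop_eq_getElem_cons hi, take_append_drop]
    exact ⟨_, _, by simp, isBalancedSplit_of_minimal_prefix (A := L.take i) (B := L.drop (i + 1))
      (by rwa [← hL]) (by rwa [← hL]) (by rwa [← hL]) (hsmall _ (getElem_mem hi))
      (by rwa [← hL]) (by rwa [← hL])⟩

theorem Nat.exists_balanced_factorization {m : ℕ} {R : ℝ} (hm : 0 < m) (hR : 1 ≤ R)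
    (hmR : (m : ℝ) ≤ R ^ 3) (hsmall : ∀ p ∈ m.primeFactorsList, (p : ℝ) ≤ R ^ 2) :
    ∃ u v : ℕ, 0 < u ∧ 0 < v ∧ m = u * v ∧ (u : ℝ) ≤ R ^ 2 ∧ (v : ℝ) ≤ R ^ 2 ∧
      2 * u.primeFactorsList.length ≤ v.primeFactorsList.length + 2 := by
  have hprimes : ∀ p ∈ m.primeFactorsList.reverse, p.Prime :=
    fun p hp => Nat.prime_of_mem_primeFactorsList (mem_reverse.1 hp)
  have hprod : m.primeFactorsList.reverse.prod = m := by
    rw [prod_reverse, Nat.prod_primeFactorsList hm.ne']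
  obtain ⟨L₁, L₂, hL, hu, hv, hcount⟩ := exists_isBalancedSplit hR
    (fun p hp => (hprimes p hp).pos) (pairwise_reverse.2 (Nat.primeFactorsList_sorted m).pairwise)
    (by rwa [hprod]) (by simpa using hsmall)
  rw [hL] at hprimes hprod
  have hprimes₁ := fun p hp => hprimes p (mem_append_left L₂ hp)
  have hprimes₂ := fun p hp => hprimes p (mem_append_right L₁ hp)
  refine ⟨L₁.prod, L₂.prod, prod_pos fun p hp => (hprimes₁ p hp).pos,
    prod_pos fun p hp => (hprimes₂ p hp).pos, by rw [← hprod, prod_append], hu, hv, ?_⟩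
  rwa [Nat.length_primeFactorsList_prod hprimes₁, Nat.length_primeFactorsList_prod hprimes₂]

theorem factorization_lemma_general (n : ℕ) (m : ℕ) (hm : 0 < m) (hmn : m ≤ n) :
    ∃ u v : ℕ, 0 < u ∧ 0 < v ∧ m = u * v ∧
      ((Nat.Prime u ∧ (n : ℝ) ^ ((2 : ℝ) / 3) < (u : ℝ)) ∨
        ((u : ℝ) ≤ (n : ℝ) ^ ((2 : ℝ) / 3) ∧ (v : ℝ) ≤ (n : ℝ) ^ ((2 : ℝ) / 3) ∧
          2 * u.primeFactorsList.length ≤ v.primeFactorsList.length + 2)) := by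
  set R : ℝ := (n : ℝ) ^ ((1 : ℝ) / 3)
  have hR : 1 ≤ R := Real.one_le_rpow (by exact_mod_cast hm.trans_le hmn) (by norm_num)
  have hRpow (k : ℕ) : R ^ k = (n : ℝ) ^ ((k : ℝ) / 3) := by
    rw [← Real.rpow_natCast, ← Real.rpow_mul (Nat.cast_nonneg n)]; ring_nf
  have hmR : (m : ℝ) ≤ R ^ 3 := by
    rw [hRpow, Nat.cast_ofNat, div_self three_ne_zero, Real.rpow_one]; exact_mod_cast hmn
  rw [show (n : ℝ) ^ ((2 : ℝ) / 3) = R ^ 2 by rw [hRpow, Nat.cast_ofNat]]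
  by_cases hbig : ∃ p ∈ m.primeFactorsList, R ^ 2 < p
  · obtain ⟨p, hp, hpR⟩ := hbig
    have hpm := Nat.dvd_of_mem_primeFactorsList hp
    have hp := Nat.prime_of_mem_primeFactorsList hp
    exact ⟨p, m / p, hp.pos, Nat.div_pos (Nat.le_of_dvd hm hpm) hp.pos,
      (Nat.mul_div_cancel' hpm).symm, .inl ⟨hp, hpR⟩⟩
  · push Not at hbig
    obtain ⟨u, v, hu, hv, huv, huR, hvR, hcount⟩ :=
      Nat.exists_balanced_factorization hm hR hmR hbig
    exact ⟨u, v, hu, hv, huv, .inr ⟨huR, hvR, hcount⟩⟩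

/-- Factorization lemma: every positive `m ≤ n` can be written as `m = u * v` where
either `u` is a prime exceeding `n^{2/3}`, or `u, v ≤ n^{2/3}` and `2Ω(u) - 2 ≤ Ω(v)`,
where `Ω` counts prime factors with multiplicity. -/
theorem factorization_lemma (n : ℕ) (hn : 0 < n) (m : ℕ) (hm : 0 < m) (hmn : m ≤ n) :
    ∃ u v : ℕ, 0 < u ∧ 0 < v ∧ m = u * v ∧
      ((Nat.Prime u ∧ (n : ℝ) ^ ((2 : ℝ) / 3) < (u : ℝ)) ∨
        ((u : ℝ) ≤ (n : ℝ) ^ ((2 : ℝ) / 3) ∧ (v : ℝ) ≤ (n : ℝ) ^ ((2 : ℝ) / 3) ∧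
          2 * u.primeFactorsList.length ≤ v.primeFactorsList.length + 2)) :=
  factorization_lemma_general n m hm hmn
end

section
/- (Step in the proof of the factorization lemma.) Let n be a positive integer, let m ≤ n be a positive integer whose largest prime factor is at most n^{2/3}, write m = p₁p₂⋯p_r with primes p₁ ≥ p₂ ≥ ⋯ ≥ p_r, and let i be the smallest index with p₁p₂⋯p_i ≥ m^{1/3}. Then u = p₁⋯p_i and v = m/u satisfy u ≤ n^{2/3}, v ≤ n^{2/3}, and Ω(v) ≥ 2Ω(u) − 2. -/
/-!
Write `w = p₁⋯p_{i-1}`, `p = pᵢ` and `v = p_{i+1}⋯p_r`, so that `u = w p`, and clear the real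
powers by cubing: minimality of `i` gives `w³ < m = w p v ≤ u³`. Then `u³ = w³ p³ ≤ w⁶ < m²`
(for `i ≥ 2`, as `p ≤ p₁ ≤ w`; for `i = 1` simply `u = p`), `v³ ≤ m²` because `u³ ≥ m`, and
`p^{2(i-1)} ≤ w² < p v ≤ p^{r-i+1}` gives `2(i-1) < r-i+1`, i.e. `2 Ω(u) ≤ Ω(v) + 2`.
-/

theorem rpow_one_third_le_natCast_iff (m x : ℕ) :
    (m : ℝ) ^ ((1 : ℝ) / 3) ≤ x ↔ m ≤ x ^ 3 := by
  rw [one_div, Real.rpow_inv_le_iff_of_pos (by positivity) (by positivity) (by norm_num)]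
  exact_mod_cast Iff.rfl

theorem natCast_le_rpow_two_thirds_iff (x n : ℕ) :
    (x : ℝ) ≤ (n : ℝ) ^ ((2 : ℝ) / 3) ↔ x ^ 3 ≤ n ^ 2 := by
  rw [show (2 : ℝ) / 3 = (2 : ℕ) * 3⁻¹ by norm_num, Real.rpow_natCast_mul (by positivity),
    Real.le_rpow_inv_iff_of_pos (by positivity) (by positivity) (by norm_num)]
  exact_mod_cast Iff.rfl

theorem Nat.length_primeFactorsList_prod_s6 {l : List ℕ} (hl : ∀ p ∈ l, p.Prime) :
    l.prod.primeFactorsList.length = l.length :=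
  (Nat.primeFactorsList_unique rfl hl).length_eq.symm

namespace List

theorem eq_take_append_getElem_cons_drop {α : Type*} (L : List α) {k : ℕ} (hk : k < L.length) :
    L = L.take k ++ L[k] :: L.drop (k + 1) := by
  rw [← drop_eq_getElem_cons hk, take_append_drop]

variable {α : Type*} [Preorder α] {L : List α}

theorem Pairwise.getElem_le_of_mem_take (hL : L.Pairwise (· ≥ ·)) {k : ℕ} (hk : k < L.length)
    {x : α} (hx : x ∈ L.take k) : L[k] ≤ x := by
  rw [L.eq_take_append_getElem_cons_drop hk, pairwise_append] at hL
  exact hL.2.2 x hx L[k] mem_cons_self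

theorem Pairwise.le_getElem_of_mem_drop (hL : L.Pairwise (· ≥ ·)) {k : ℕ} (hk : k < L.length)
    {x : α} (hx : x ∈ L.drop (k + 1)) : x ≤ L[k] := by
  rw [L.eq_take_append_getElem_cons_drop hk, pairwise_append, pairwise_cons] at hL
  exact hL.2.1.1 x hx

variable {M : Type*} [Monoid M] [Preorder M] [MulLeftMono M] [MulRightMono M] {L : List M}

theorem Pairwise.getElem_pow_le_prod_take (hL : L.Pairwise (· ≥ ·)) {k : ℕ}
    (hk : k < L.length) : L[k] ^ k ≤ (L.take k).prod := by
  simpa [length_take_of_le hk.le] using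
    pow_card_le_prod _ L[k] fun _ hx => hL.getElem_le_of_mem_take hk hx

theorem Pairwise.prod_drop_le_getElem_pow (hL : L.Pairwise (· ≥ ·)) {k : ℕ}
    (hk : k < L.length) : (L.drop (k + 1)).prod ≤ L[k] ^ (L.length - (k + 1)) := by
  simpa using prod_le_pow_card _ L[k] fun _ hx => hL.le_getElem_of_mem_drop hk hx

end List

theorem mul_cube_le_sq {w p m n : ℕ} (hw : w ^ 3 < m) (hmn : m ≤ n) (hp : p ^ 3 ≤ n ^ 2)
    (hpw : w = 1 ∨ p ≤ w) : (w * p) ^ 3 ≤ n ^ 2 := by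
  rcases hpw with rfl | hpw
  · simpa using hp
  · calc (w * p) ^ 3 = w ^ 3 * p ^ 3 := by ring
      _ ≤ w ^ 3 * w ^ 3 := Nat.mul_le_mul_left _ (Nat.pow_le_pow_left hpw 3)
      _ ≤ m * m := Nat.mul_le_mul hw.le hw.le
      _ ≤ n ^ 2 := by rw [sq]; exact Nat.mul_le_mul hmn hmn

theorem cube_le_sq_of_le_cube {m u v : ℕ} (hm : 0 < m) (huv : m = u * v) (hu : m ≤ u ^ 3) :
    v ^ 3 ≤ m ^ 2 := by
  refine Nat.le_of_mul_le_mul_left ?_ hm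
  calc m * v ^ 3 ≤ u ^ 3 * v ^ 3 := Nat.mul_le_mul_right _ hu
    _ = m * m ^ 2 := by rw [huv]; ring

theorem two_mul_lt_succ_of_cube_lt {w p v k b : ℕ} (hp : 1 < p) (hw : p ^ k ≤ w)
    (hv : v ≤ p ^ b) (hcube : w ^ 3 < w * p * v) : 2 * k < b + 1 := by
  have hsq : w ^ 2 < p * v :=
    Nat.lt_of_mul_lt_mul_left (a := w) (by linarith [mul_assoc w p v, pow_succ' w 2])
  rw [← Nat.pow_lt_pow_iff_right hp]
  calc p ^ (2 * k) = (p ^ k) ^ 2 := by ring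
    _ ≤ w ^ 2 := Nat.pow_le_pow_left hw 2
    _ < p * v := hsq
    _ ≤ p * p ^ b := Nat.mul_le_mul_left p hv
    _ = p ^ (b + 1) := by ring

theorem factorization_lemma_step_general (n : ℕ) (m : ℕ) (hm : 0 < m) (hmn : m ≤ n)
    (L : List ℕ) (hprime : ∀ p ∈ L, Nat.Prime p) (hsorted : L.Pairwise (· ≥ ·))
    (hprod : L.prod = m) (hsmall : ∀ p ∈ L, (p : ℝ) ≤ (n : ℝ) ^ ((2 : ℝ) / 3))
    (i : ℕ) (hi1 : 1 ≤ i) (hiL : i ≤ L.length)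
    (hge : (m : ℝ) ^ ((1 : ℝ) / 3) ≤ ((L.take i).prod : ℝ))
    (hmin : ∀ j : ℕ, j < i → ((L.take j).prod : ℝ) < (m : ℝ) ^ ((1 : ℝ) / 3)) :
    ((L.take i).prod : ℝ) ≤ (n : ℝ) ^ ((2 : ℝ) / 3) ∧
    ((m / (L.take i).prod : ℕ) : ℝ) ≤ (n : ℝ) ^ ((2 : ℝ) / 3) ∧
    2 * ((L.take i).prod).primeFactorsList.length ≤
      (m / (L.take i).prod).primeFactorsList.length + 2 := by
  obtain ⟨k, rfl⟩ : ∃ k, i = k + 1 := ⟨i - 1, by omega⟩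
  have hk : k < L.length := hiL
  set p := L[k]
  set w := (L.take k).prod
  set v := (L.drop (k + 1)).prod
  have hp : p ∈ L := List.getElem_mem hk
  have hu : (L.take (k + 1)).prod = w * p := L.prod_take_succ k hk
  have hmwpv : m = w * p * v := by rw [← hprod, ← L.prod_take_mul_prod_drop (k + 1), hu]
  have hv : m / (w * p) = v :=
    hmwpv ▸ Nat.mul_div_cancel_left v (Nat.pos_of_ne_zero (left_ne_zero_of_mul (hmwpv ▸ hm.ne')))
  have hw : w ^ 3 < m := not_le.mp fun h =>
    (hmin k (lt_add_one k)).not_ge ((rpow_one_third_le_natCast_iff m w).mpr h)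
  have hpw : p ^ k ≤ w := hsorted.getElem_pow_le_prod_take hk
  have hvp : v ≤ p ^ (L.length - (k + 1)) := hsorted.prod_drop_le_getElem_pow hk
  have hΩu : (L.take (k + 1)).prod.primeFactorsList.length = k + 1 := by
    rw [Nat.length_primeFactorsList_prod_s6 fun q hq => hprime q (List.mem_of_mem_take hq),
      List.length_take_of_le hk]
  have hΩv : v.primeFactorsList.length = L.length - (k + 1) :=
    (Nat.length_primeFactorsList_prod_s6 fun q hq => hprime q (List.mem_of_mem_drop hq)).trans
      List.length_drop
  rw [rpow_one_third_le_natCast_iff, hu] at hge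
  rw [hΩu, hu, hv, hΩv, natCast_le_rpow_two_thirds_iff, natCast_le_rpow_two_thirds_iff]
  refine ⟨mul_cube_le_sq hw hmn ((natCast_le_rpow_two_thirds_iff p n).mp (hsmall p hp)) ?_,
    (cube_le_sq_of_le_cube hm (by rw [hmwpv, mul_assoc]) hge).trans (Nat.pow_le_pow_left hmn 2),
    ?_⟩
  · rcases Nat.eq_zero_or_pos k with rfl | hk0
    · exact Or.inl List.prod_nil
    · exact Or.inr ((Nat.le_self_pow hk0.ne' p).trans hpw)
  · have := two_mul_lt_succ_of_cube_lt (hprime p hp).one_lt hpw hvp (hmwpv ▸ hw)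
    omega

/-- Step in the proof of the factorization lemma: if `m ≤ n` has all prime factors at most
`n^{2/3}`, `m = p₁p₂⋯p_r` with primes `p₁ ≥ p₂ ≥ ⋯ ≥ p_r` (given as a list `L`), and `i` is
the smallest index with `p₁⋯p_i ≥ m^{1/3}`, then `u = p₁⋯p_i` and `v = m / u` satisfy
`u ≤ n^{2/3}`, `v ≤ n^{2/3}` and `Ω(v) ≥ 2Ω(u) - 2`. -/
theorem factorization_lemma_step (n : ℕ) (hn : 0 < n) (m : ℕ) (hm : 0 < m) (hmn : m ≤ n)
    (L : List ℕ) (hprime : ∀ p ∈ L, Nat.Prime p) (hsorted : L.Pairwise (· ≥ ·))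
    (hprod : L.prod = m) (hsmall : ∀ p ∈ L, (p : ℝ) ≤ (n : ℝ) ^ ((2 : ℝ) / 3))
    (i : ℕ) (hi1 : 1 ≤ i) (hiL : i ≤ L.length)
    (hge : (m : ℝ) ^ ((1 : ℝ) / 3) ≤ ((L.take i).prod : ℝ))
    (hmin : ∀ j : ℕ, j < i → ((L.take j).prod : ℝ) < (m : ℝ) ^ ((1 : ℝ) / 3)) :
    ((L.take i).prod : ℝ) ≤ (n : ℝ) ^ ((2 : ℝ) / 3) ∧
    ((m / (L.take i).prod : ℕ) : ℝ) ≤ (n : ℝ) ^ ((2 : ℝ) / 3) ∧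
    2 * ((L.take i).prod).primeFactorsList.length ≤
      (m / (L.take i).prod).primeFactorsList.length + 2 :=
  factorization_lemma_step_general n m hm hmn L hprime hsorted hprod hsmall i hi1 hiL hge hmin
end

section
/- Let u and v be positive integers with v ≤ u. Every bipartite simple graph whose two vertex classes have sizes u and v and which contains no cycle of length 6 has fewer than 2u + v²/2 edges. -/
/-- A simple graph contains no cycle of length 6. -/
def C6Free {V : Type*} (G : SimpleGraph V) : Prop :=
  ∀ (v : V) (w : G.Walk v v), w.IsCycle → w.length ≠ 6

/-!
Write `S a` for the neighbourhood of a vertex `a` of the first class, so that the graph has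
`∑ a, |S a|` edges. A `C₆` is exactly a Berge triangle in the family `S`, so it suffices to show
`∑ a, (|S a| - 2) ≤ C(v, 2)` for a Berge-triangle-free family. As `3 (d - 2) ≤ C(d, 2)`, this
follows once the pairs contained in the sets of size at least three are counted, with multiplicity,
at most `3 C(v, 2)` times. A pair `p` lying in at least three such sets (its book) is the full
intersection of any two of them, so every set of the book has a point outside `p` private to it.
A point `z` of `p` together with such a private point spans a pair lying in a single set, and each
such pair arises from at most two choices of `z`. So heavy pairs are paid for by pairs of
multiplicity one, and no pair is charged more than three times.
-/

open Finset Sum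

variable {α β : Type*}

def BergeTriangleFree (S : α → Finset β) : Prop :=
  ∀ ⦃a₁ a₂ a₃ : α⦄ ⦃b₁ b₂ b₃ : β⦄, a₁ ≠ a₂ → a₁ ≠ a₃ → a₂ ≠ a₃ → b₁ ≠ b₂ → b₁ ≠ b₃ → b₂ ≠ b₃ →
    b₁ ∈ S a₁ → b₁ ∈ S a₂ → b₂ ∈ S a₂ → b₂ ∈ S a₃ → b₃ ∈ S a₃ → b₃ ∈ S a₁ → False

lemma three_mul_sub_two_le_choose_two (d : ℕ) : 3 * (d - 2) ≤ d.choose 2 := by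
  obtain _ | _ | d := d
  · simp
  · simp
  rw [Nat.choose_two_right, Nat.le_div_iff_mul_le two_pos, show d + 1 + 1 - 2 = d by omega,
    show d + 1 + 1 - 1 = d + 1 by omega]
  nlinarith [Nat.le_mul_self d]

section Book

variable [Fintype α] [DecidableEq β] {S : α → Finset β} {p p' : Finset β} {a a' : α} {z c : β}

variable (S) in
def book (p : Finset β) : Finset α := {a | 3 ≤ #(S a) ∧ p ⊆ S a}

variable (S) in
def bookPrivate (p : Finset β) : Finset β := (book S p).biUnion fun a ↦ S a \ p

lemma mem_book : a ∈ book S p ↔ 3 ≤ #(S a) ∧ p ⊆ S a := by simp [book]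

lemma subset_of_mem_book (ha : a ∈ book S p) : p ⊆ S a := (mem_book.1 ha).2

lemma mem_bookPrivate : c ∈ bookPrivate S p ↔ ∃ a ∈ book S p, c ∈ S a ∧ c ∉ p := by
  simp [bookPrivate]

lemma ne_of_mem_bookPrivate (hc : c ∈ bookPrivate S p) (hz : z ∈ p) : z ≠ c := by
  obtain ⟨-, -, -, hcp⟩ := mem_bookPrivate.1 hc
  exact ne_of_mem_of_not_mem hz hcp

lemma exists_mem_book_ne_ne (hp : 3 ≤ #(book S p)) (a₁ a₂ : α) :
    ∃ a ∈ book S p, a ≠ a₁ ∧ a ≠ a₂ := by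
  classical
  obtain ⟨a, ha, hne⟩ := exists_mem_notMem_of_card_lt_card
    (card_le_two.trans_lt hp : #({a₁, a₂} : Finset α) < #(book S p))
  simp only [mem_insert, mem_singleton, not_or] at hne
  exact ⟨a, ha, hne⟩

lemma sum_choose_two_eq_sum_card_book [Fintype β] :
    ∑ a ∈ univ with 3 ≤ #(S a), (#(S a)).choose 2 =
      ∑ p ∈ powersetCard 2 (univ : Finset β), #(book S p) := by
  convert sum_card_bipartiteAbove_eq_sum_card_bipartiteBelow (fun a (p : Finset β) ↦ p ⊆ S a)
    using 2 with a - p -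
  · rw [← card_powersetCard, bipartiteAbove]
    congr 1
    ext p
    simp [mem_powersetCard, and_comm]
  · simp [bipartiteBelow, book, filter_filter]

namespace BergeTriangleFree

lemma inter_eq_of_mem_book (hS : BergeTriangleFree S) (hp : #p = 2) (hm : 3 ≤ #(book S p))
    (ha : a ∈ book S p) (ha' : a' ∈ book S p) (hne : a ≠ a') : S a ∩ S a' = p := by
  refine Subset.antisymm (fun c hc ↦ ?_)
    (subset_inter (subset_of_mem_book ha) (subset_of_mem_book ha'))
  by_contra hcp
  obtain ⟨x, y, hxy, rfl⟩ := card_eq_two.1 hp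
  obtain ⟨a'', ha'', hne₁, hne₂⟩ := exists_mem_book_ne_ne hm a a'
  rw [mem_inter] at hc
  simp only [mem_insert, mem_singleton, not_or] at hcp
  exact hS hne hne₁.symm hne₂.symm hcp.2 hcp.1 hxy.symm hc.1 hc.2
    (subset_of_mem_book ha' (by simp)) (subset_of_mem_book ha'' (by simp))
    (subset_of_mem_book ha'' (by simp)) (subset_of_mem_book ha (by simp))

lemma book_pair_eq_singleton (hS : BergeTriangleFree S) (hp : #p = 2) (hm : 3 ≤ #(book S p))
    (ha : a ∈ book S p) (hz : z ∈ p) (hc : c ∈ S a) (hcp : c ∉ p) : book S {z, c} = {a} := by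
  ext a'
  simp only [mem_singleton, mem_book, insert_subset_iff, singleton_subset_iff]
  refine ⟨fun ⟨hbig, hza', hca'⟩ ↦ ?_,
    fun h ↦ h ▸ ⟨(mem_book.1 ha).1, subset_of_mem_book ha hz, hc⟩⟩
  by_contra hne
  by_cases hpa' : p ⊆ S a'
  · have := hS.inter_eq_of_mem_book hp hm ha (mem_book.2 ⟨hbig, hpa'⟩) (Ne.symm hne)
    exact hcp (this ▸ mem_inter.2 ⟨hc, hca'⟩)
  obtain ⟨w, hwp, hwa'⟩ := not_subset.1 hpa'
  obtain ⟨a'', ha'', hne₁, hne₂⟩ := exists_mem_book_ne_ne hm a a'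
  exact hS hne (Ne.symm hne₂) hne₁.symm (ne_of_mem_of_not_mem hwp hcp).symm
    (ne_of_mem_of_not_mem hz hcp).symm (ne_of_mem_of_not_mem hza' hwa').symm
    hca' hc (subset_of_mem_book ha hwp) (subset_of_mem_book ha'' hwp)
    (subset_of_mem_book ha'' hz) hza'

lemma eq_of_mem_book_of_mem_book (hS : BergeTriangleFree S) (hp : #p = 2) (hp' : #p' = 2)
    (hm : 3 ≤ #(book S p)) (hm' : 3 ≤ #(book S p')) (ha : a ∈ book S p) (ha' : a ∈ book S p')
    (hz : z ∈ p) (hz' : z ∈ p') : p = p' := by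
  obtain ⟨w, hw, hwz⟩ := exists_mem_ne (hp ▸ one_lt_two) z
  obtain ⟨w', hw', hw'z⟩ := exists_mem_ne (hp' ▸ one_lt_two) z
  have hpair {q : Finset β} (hq : #q = 2) {x : β} (hx : x ∈ q) (hxz : x ≠ z) (hzq : z ∈ q) :
      q = {z, x} :=
    (eq_of_subset_of_card_le (by simp [insert_subset_iff, *])
      (by simp [card_pair hxz.symm, hq])).symm
  by_cases hww' : w = w'
  · rw [hpair hp hw hwz hz, hpair hp' hw' hw'z hz', hww']
  by_contra hne
  obtain ⟨b, hb, hba, -⟩ := exists_mem_book_ne_ne hm a a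
  obtain ⟨b', hb', hb'a, -⟩ := exists_mem_book_ne_ne hm' a a
  have hbb' : b ≠ b' := by
    rintro rfl
    exact hne ((hS.inter_eq_of_mem_book hp hm hb ha hba).symm.trans
      (hS.inter_eq_of_mem_book hp' hm' hb' ha' hba))
  exact hS hba hbb' (Ne.symm hb'a) hww' hwz hw'z (subset_of_mem_book hb hw)
    (subset_of_mem_book ha hw) (subset_of_mem_book ha' hw') (subset_of_mem_book hb' hw')
    (subset_of_mem_book hb' hz') (subset_of_mem_book hb hz)

lemma card_book_le_card_bookPrivate (hS : BergeTriangleFree S) (hp : #p = 2)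
    (hm : 3 ≤ #(book S p)) : #(book S p) ≤ #(bookPrivate S p) := by
  refine card_le_card_biUnion (fun a ha a' ha' hne ↦ ?_) fun a ha ↦ ?_
  · refine disjoint_left.2 fun c hc hc' ↦ (mem_sdiff.1 hc).2 ?_
    rw [← hS.inter_eq_of_mem_book hp hm ha ha' hne]
    exact mem_inter.2 ⟨(mem_sdiff.1 hc).1, (mem_sdiff.1 hc').1⟩
  · rw [← card_pos, card_sdiff_of_subset (subset_of_mem_book ha)]
    have := (mem_book.1 ha).1
    omega

lemma exists_book_pair_eq_singleton (hS : BergeTriangleFree S) (hp : #p = 2)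
    (hm : 3 ≤ #(book S p)) (hc : c ∈ bookPrivate S p) (hz : z ∈ p) :
    ∃ a ∈ book S p, book S {z, c} = {a} := by
  obtain ⟨a, ha, hca, hcp⟩ := mem_bookPrivate.1 hc
  exact ⟨a, ha, hS.book_pair_eq_singleton hp hm ha hz hca hcp⟩

lemma eq_of_mem_bookPrivate_of_mem_bookPrivate (hS : BergeTriangleFree S) (hp : #p = 2)
    (hp' : #p' = 2) (hm : 3 ≤ #(book S p)) (hm' : 3 ≤ #(book S p')) (hc : c ∈ bookPrivate S p)
    (hc' : c ∈ bookPrivate S p') (hz : z ∈ p) (hz' : z ∈ p') : p = p' := by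
  obtain ⟨a, ha, hbook⟩ := hS.exists_book_pair_eq_singleton hp hm hc hz
  obtain ⟨a', ha', hbook'⟩ := hS.exists_book_pair_eq_singleton hp' hm' hc' hz'
  obtain rfl : a = a' := singleton_injective (hbook.symm.trans hbook')
  exact hS.eq_of_mem_book_of_mem_book hp hp' hm hm' ha ha' hz hz'

lemma sum_card_book_heavy_le [Fintype β] (hS : BergeTriangleFree S) :
    ∑ p ∈ powersetCard 2 univ with 3 ≤ #(book S p), #(book S p) ≤
      #{q ∈ powersetCard 2 (univ : Finset β) | #(book S q) = 1} := by
  set H := {p ∈ powersetCard 2 (univ : Finset β) | 3 ≤ #(book S p)}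
  set L := {q ∈ powersetCard 2 (univ : Finset β) | #(book S q) = 1}
  have hH {p} (hp : p ∈ H) : #p = 2 ∧ 3 ≤ #(book S p) := by simpa [H] using hp
  -- `c` private to the book of `p` and `z ∈ p` span a pair of multiplicity one; keeping `z`
  -- makes this charging injective.
  let f : (Σ _ : Finset β, β × β) → Σ _ : Finset β, β := fun x ↦ ⟨{x.2.1, x.2.2}, x.2.1⟩
  have hmaps : Set.MapsTo f (H.sigma fun p ↦ p ×ˢ bookPrivate S p) (L.sigma id) := by
    rintro ⟨p, z, c⟩ hx
    simp only [coe_sigma, Set.mem_sigma_iff, mem_coe, mem_product] at hx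
    obtain ⟨hp, hz, hc⟩ := hx
    obtain ⟨a, -, hbook⟩ := hS.exists_book_pair_eq_singleton (hH hp).1 (hH hp).2 hc hz
    simp [f, L, hbook, card_pair (ne_of_mem_bookPrivate hc hz)]
  have hinj : Set.InjOn f (H.sigma fun p ↦ p ×ˢ bookPrivate S p) := by
    rintro ⟨p, z, c⟩ hx ⟨p', z', c'⟩ hy hxy
    simp only [coe_sigma, Set.mem_sigma_iff, mem_coe, mem_product] at hx hy
    obtain ⟨hp, hz, hc⟩ := hx
    obtain ⟨hp', hz', hc'⟩ := hy
    obtain ⟨hzc, rfl⟩ : ({z, c} : Finset β) = {z', c'} ∧ z = z' := by simpa [f] using hxy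
    obtain rfl : c = c' := by
      have : c ∈ ({z, c'} : Finset β) := hzc ▸ mem_insert_of_mem (mem_singleton_self c)
      simpa [(ne_of_mem_bookPrivate hc hz).symm] using this
    obtain rfl := hS.eq_of_mem_bookPrivate_of_mem_bookPrivate (hH hp).1 (hH hp').1 (hH hp).2
      (hH hp').2 hc hc' hz hz'
    rfl
  suffices 2 * ∑ p ∈ H, #(book S p) ≤ 2 * #L by omega
  calc 2 * ∑ p ∈ H, #(book S p) ≤ ∑ p ∈ H, #p * #(bookPrivate S p) := by
        rw [mul_sum]
        exact sum_le_sum fun p hp ↦ (hH hp).1 ▸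
          Nat.mul_le_mul_left 2 (hS.card_book_le_card_bookPrivate (hH hp).1 (hH hp).2)
    _ = #(H.sigma fun p ↦ p ×ˢ bookPrivate S p) := by simp [card_sigma, card_product]
    _ ≤ #(L.sigma id) := card_le_card_of_injOn f hmaps hinj
    _ = 2 * #L := by
        rw [card_sigma, sum_const_nat (m := 2) fun q hq ↦ by simpa [L] using (mem_filter.1 hq).1,
          mul_comm]

lemma sum_card_book_le [Fintype β] (hS : BergeTriangleFree S) :
    ∑ p ∈ powersetCard 2 (univ : Finset β), #(book S p) ≤ 3 * (Fintype.card β).choose 2 := by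
  rw [← sum_filter_add_sum_filter_not _ (fun p ↦ 3 ≤ #(book S p))]
  have hlight : ∑ p ∈ powersetCard 2 univ with ¬3 ≤ #(book S p), #(book S p) ≤
      2 * #(powersetCard 2 (univ : Finset β)) := by
    refine (sum_le_card_nsmul _ _ 2 fun p hp ↦ ?_).trans ?_
    · have := (mem_filter.1 hp).2
      omega
    · rw [smul_eq_mul, mul_comm]
      exact Nat.mul_le_mul_left 2 (card_filter_le _ _)
  have hheavy := (hS.sum_card_book_heavy_le).trans (card_filter_le _ _)
  rw [card_powersetCard, card_univ] at hlight hheavy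
  omega

theorem sum_card_le [Fintype β] (hS : BergeTriangleFree S) :
    ∑ a, #(S a) ≤ 2 * Fintype.card α + (Fintype.card β).choose 2 := by
  have hexcess : 3 * ∑ a, (#(S a) - 2) ≤ 3 * (Fintype.card β).choose 2 :=
    calc 3 * ∑ a, (#(S a) - 2) = ∑ a ∈ univ with 3 ≤ #(S a), 3 * (#(S a) - 2) := by
          rw [mul_sum, sum_filter_of_ne fun a _ h ↦ by omega]
      _ ≤ ∑ a ∈ univ with 3 ≤ #(S a), (#(S a)).choose 2 :=
          sum_le_sum fun a _ ↦ three_mul_sub_two_le_choose_two _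
      _ = ∑ p ∈ powersetCard 2 (univ : Finset β), #(book S p) := sum_choose_two_eq_sum_card_book
      _ ≤ 3 * (Fintype.card β).choose 2 := hS.sum_card_book_le
  calc ∑ a, #(S a) ≤ ∑ a, (2 + (#(S a) - 2)) := sum_le_sum fun a _ ↦ by omega
    _ = 2 * Fintype.card α + ∑ a, (#(S a) - 2) := by
        rw [sum_add_distrib, sum_const, card_univ, smul_eq_mul, mul_comm]
    _ ≤ 2 * Fintype.card α + (Fintype.card β).choose 2 := by omega

end BergeTriangleFree

end Book

namespace C6Free

open SimpleGraph Walk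

lemma not_nodup_of_adj {V : Type*} {G : SimpleGraph V} (hG : C6Free G) {x₁ x₂ x₃ x₄ x₅ x₆ : V}
    (h₁₂ : G.Adj x₁ x₂) (h₂₃ : G.Adj x₂ x₃) (h₃₄ : G.Adj x₃ x₄) (h₄₅ : G.Adj x₄ x₅)
    (h₅₆ : G.Adj x₅ x₆) (h₆₁ : G.Adj x₆ x₁) : ¬ [x₁, x₂, x₃, x₄, x₅, x₆].Nodup := by
  intro hnd
  refine hG x₁ (cons h₁₂ (cons h₂₃ (cons h₃₄ (cons h₄₅ (cons h₅₆ (cons h₆₁ nil)))))) ?_ rfl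
  simp only [List.nodup_cons, List.mem_cons, List.not_mem_nil, not_or] at hnd
  rw [cons_isCycle_iff, isPath_def]
  refine ⟨by simp_all [eq_comm], ?_⟩
  simp only [edges_cons, edges_nil, List.mem_cons, List.not_mem_nil, Sym2.eq_iff]
  aesop

lemma bergeTriangleFree [Fintype β] {G : SimpleGraph (α ⊕ β)} [DecidableRel G.Adj]
    (hG : C6Free G) : BergeTriangleFree fun a ↦ ({b | G.Adj (inl a) (inr b)} : Finset β) := by
  intro a₁ a₂ a₃ b₁ b₂ b₃ ha₁₂ ha₁₃ ha₂₃ hb₁₂ hb₁₃ hb₂₃ h₁ h₂ h₃ h₄ h₅ h₆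
  simp only [mem_filter, mem_univ, true_and] at h₁ h₂ h₃ h₄ h₅ h₆
  exact hG.not_nodup_of_adj h₁ h₂.symm h₃ h₄.symm h₅ h₆.symm (by simp [*])

end C6Free

namespace SimpleGraph

lemma card_edgeFinset_eq_sum_card_adj_inr [Fintype α] [Fintype β]
    {G : SimpleGraph (α ⊕ β)} [DecidableRel G.Adj] (hL : ∀ a a', ¬ G.Adj (inl a) (inl a'))
    (hR : ∀ b b', ¬ G.Adj (inr b) (inr b')) :
    #G.edgeFinset = ∑ a, #({b | G.Adj (inl a) (inr b)} : Finset β) := by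
  classical
  have hG : G.IsBipartiteWith ↑(univ.map (.inl : α ↪ α ⊕ β))
      ↑(univ.map (.inr : β ↪ α ⊕ β)) := by
    refine ⟨by simp [Set.disjoint_left], ?_⟩
    rintro (a | b) (a' | b') h
    · exact (hL a a' h).elim
    · simp
    · simp
    · exact (hR b b' h).elim
  rw [← isBipartiteWith_sum_degrees_eq_card_edges hG, sum_map]
  refine sum_congr rfl fun a _ ↦ ?_
  rw [← card_neighborFinset_eq_degree, isBipartiteWith_neighborFinset hG (by simp), filter_map,
    card_map]
  rfl

end SimpleGraph

theorem C6Free.card_edgeFinset_le [Fintype α] [Fintype β] {G : SimpleGraph (α ⊕ β)}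
    [DecidableRel G.Adj] (hL : ∀ a a', ¬ G.Adj (inl a) (inl a'))
    (hR : ∀ b b', ¬ G.Adj (inr b) (inr b')) (hG : C6Free G) :
    #G.edgeFinset ≤ 2 * Fintype.card α + (Fintype.card β).choose 2 := by
  classical
  rw [SimpleGraph.card_edgeFinset_eq_sum_card_adj_inr hL hR]
  exact hG.bergeTriangleFree.sum_card_le

theorem ex_C6_bipartite_gyori_general (u v : ℕ) (hv : 0 < v)
    (G : SimpleGraph (Fin u ⊕ Fin v))
    (hbipL : ∀ a b : Fin u, ¬ G.Adj (Sum.inl a) (Sum.inl b))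
    (hbipR : ∀ a b : Fin v, ¬ G.Adj (Sum.inr a) (Sum.inr b))
    (hC6 : C6Free G) :
    (G.edgeSet.ncard : ℝ) < 2 * (u : ℝ) + (v : ℝ) ^ 2 / 2 := by
  classical
  have hedges := hC6.card_edgeFinset_le hbipL hbipR
  simp only [Fintype.card_fin] at hedges
  have hchoose : ((v.choose 2 : ℕ) : ℝ) < (v : ℝ) ^ 2 / 2 := by
    rw [Nat.cast_choose_two]
    have : (0 : ℝ) < v := by exact_mod_cast hv
    linarith
  rw [← SimpleGraph.coe_edgeFinset, Set.ncard_coe_finset]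
  calc (#G.edgeFinset : ℝ) ≤ 2 * u + v.choose 2 := by exact_mod_cast hedges
    _ < 2 * (u : ℝ) + (v : ℝ) ^ 2 / 2 := by linarith

/-- Every `C₆`-free bipartite simple graph with vertex classes of sizes `u` and `v`, where
`v ≤ u`, has fewer than `2u + v²/2` edges. -/
theorem ex_C6_bipartite_gyori (u v : ℕ) (hu : 0 < u) (hv : 0 < v) (hvu : v ≤ u)
    (G : SimpleGraph (Fin u ⊕ Fin v))
    (hbipL : ∀ a b : Fin u, ¬ G.Adj (Sum.inl a) (Sum.inl b))
    (hbipR : ∀ a b : Fin v, ¬ G.Adj (Sum.inr a) (Sum.inr b))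
    (hC6 : C6Free G) :
    (G.edgeSet.ncard : ℝ) < 2 * (u : ℝ) + (v : ℝ) ^ 2 / 2 :=
  ex_C6_bipartite_gyori_general u v hv G hbipL hbipR hC6
end

section
/- Let n ≥ 2 and let A ⊆ {1,…,n} be a multiplicative 3-Sidon set. Suppose each element a ∈ A is assigned a factorization a = u_a · v_a with positive integers u_a ≠ v_a, and let G be the simple graph on the positive integers whose edge set is { {u_a, v_a} : a ∈ A }. Then G contains no cycle of length 6. -/
/-- A finite set of naturals is a multiplicative 3-Sidon set if there do not exist
pairwise distinct elements `s₁, s₂, s₃, t₁, t₂, t₃` of it with `s₁s₂s₃ = t₁t₂t₃`. -/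
def MulSidon3 (A : Finset ℕ) : Prop :=
  ¬ ∃ s₁ s₂ s₃ t₁ t₂ t₃ : ℕ, s₁ ∈ A ∧ s₂ ∈ A ∧ s₃ ∈ A ∧ t₁ ∈ A ∧ t₂ ∈ A ∧ t₃ ∈ A ∧
    ([s₁, s₂, s₃, t₁, t₂, t₃] : List ℕ).Nodup ∧ s₁ * s₂ * s₃ = t₁ * t₂ * t₃

/-- If `A ⊆ {1, …, n}` is a multiplicative 3-Sidon set and every `a ∈ A` is assigned a
factorization `a = u_a * v_a` with `u_a ≠ v_a`, then the simple graph on `ℕ` whose edges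
are exactly the pairs `{u_a, v_a}` for `a ∈ A` contains no cycle of length 6. -/
theorem mulSidon3_graph_C6Free (n : ℕ) (hn : 2 ≤ n) (A : Finset ℕ)
    (hA : A ⊆ Finset.Icc 1 n) (hSidon : MulSidon3 A) (u v : ℕ → ℕ)
    (hfac : ∀ a ∈ A, a = u a * v a ∧ 0 < u a ∧ 0 < v a ∧ u a ≠ v a)
    (G : SimpleGraph ℕ)
    (hG : ∀ x y : ℕ, G.Adj x y ↔ ∃ a ∈ A, s(x, y) = s(u a, v a)) :
    ∀ (x : ℕ) (w : G.Walk x x), w.IsCycle → w.length ≠ 6 := by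
  have hedge : ∀ p q : ℕ, G.Adj p q → p * q ∈ A ∧ s(p, q) = s(u (p*q), v (p*q)) := by
    intro p q h
    obtain ⟨a, ha, he⟩ := (hG p q).1 h
    obtain ⟨hfa, _, _, _⟩ := hfac a ha
    rw [Sym2.eq_iff] at he
    have hpq : p * q = a := by
      rcases he with ⟨h1, h2⟩ | ⟨h1, h2⟩ <;> subst h1 <;> subst h2
      · exact hfa.symm
      · rw [mul_comm]; exact hfa.symm
    constructor
    · rw [hpq]; exact ha
    · rw [hpq, Sym2.eq_iff]; tauto
  have hinj : ∀ p q p' q' : ℕ, G.Adj p q → G.Adj p' q' → p * q = p' * q' →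
      s(p, q) = s(p', q') := by
    intro p q p' q' h h' heq
    rw [(hedge p q h).2, (hedge p' q' h').2, heq]
  intro x w hc hlen
  cases w with
  | nil => simp at hlen
  | cons h1 w => cases w with
    | nil => simp at hlen
    | cons h2 w => cases w with
      | nil => simp at hlen
      | cons h3 w => cases w with
        | nil => simp at hlen
        | cons h4 w => cases w with
          | nil => simp at hlen
          | cons h5 w => cases w with
            | nil => simp at hlen
            | cons h6 w => cases w with
              | cons h7 w => simp [SimpleGraph.Walk.length_cons] at hlen
              | nil =>
                rename_i x2 x3 x4 x5 x6
                have hnd := hc.2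
                simp [SimpleGraph.Walk.support_cons, List.nodup_cons] at hnd
                obtain ⟨⟨n21, n22, n23, n24, n25⟩, ⟨n31, n32, n33, n34⟩,
                  ⟨n41, n42, n43⟩, ⟨n51, n52⟩, n61⟩ := hnd
                apply hSidon
                refine ⟨x*x2, x3*x4, x5*x6, x2*x3, x4*x5, x6*x, (hedge _ _ h1).1,
                  (hedge _ _ h3).1, (hedge _ _ h5).1, (hedge _ _ h2).1,
                  (hedge _ _ h4).1, (hedge _ _ h6).1, ?_, by ring⟩
                simp only [List.nodup_cons, List.mem_cons, List.not_mem_nil,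
                  List.nodup_nil, or_false, not_or, and_true, not_false_eq_true]
                refine ⟨⟨?_, ?_, ?_, ?_, ?_⟩, ⟨?_, ?_, ?_, ?_⟩, ⟨?_, ?_, ?_⟩, ⟨?_, ?_⟩, ?_⟩ <;>
                  · intro hpe
                    first
                    | (have := hinj _ _ _ _ h1 h3 hpe) | (have := hinj _ _ _ _ h1 h5 hpe)
                    | (have := hinj _ _ _ _ h1 h2 hpe) | (have := hinj _ _ _ _ h1 h4 hpe)
                    | (have := hinj _ _ _ _ h1 h6 hpe) | (have := hinj _ _ _ _ h3 h5 hpe)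
                    | (have := hinj _ _ _ _ h3 h2 hpe) | (have := hinj _ _ _ _ h3 h4 hpe)
                    | (have := hinj _ _ _ _ h3 h6 hpe) | (have := hinj _ _ _ _ h5 h2 hpe)
                    | (have := hinj _ _ _ _ h5 h4 hpe) | (have := hinj _ _ _ _ h5 h6 hpe)
                    | (have := hinj _ _ _ _ h2 h4 hpe) | (have := hinj _ _ _ _ h2 h6 hpe)
                    | (have := hinj _ _ _ _ h4 h6 hpe)
                    rw [Sym2.eq_iff] at this
                    rcases this with ⟨e1, e2⟩ | ⟨e1, e2⟩ <;> omega
end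

section
/- There exists a constant c > 0 and an integer N such that for all n ≥ N and all integers k, l satisfying 0.55 log log n ≤ k, 2k − 2 ≤ l, and l ≤ 1.6 log log n, one has ((log log n)^{k−1}/(k−1)!) · ((log log n)^{l−1}/(l−1)!) ≤ c · (log n)^{3·2^{−2/3}}. -/
/-!
With `L = log log n`, the bound `m ^ m / m ! ≤ e ^ m` gives
`L ^ m / m ! ≤ exp (L * (1 - Q (m / L)))` for Ford's function `Q u = u log u - u + 1`.
Trading the factor `L / (k - 1) ≤ 2` lowers `k - 1` to `p = k - 2`, after which `q = l - 1 ≥ 2 p`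
and `2 p ≥ L` (as `2 * 0.55 > 1`). Since `Q` increases on `[1, ∞)`, the exponent is at most
`L * (2 - Q a - Q (2 a))` with `a = p / L`, and the substitution `u = 2 ^ (2/3) a` turns
`2 - Q a - Q (2 a)` into `3 * 2 ^ (-2/3) * (1 - Q u) ≤ 3 * 2 ^ (-2/3)`.
-/

open Real
open scoped Nat

noncomputable def fordQ (u : ℝ) : ℝ := u * log u - u + 1

lemma fordQ_nonneg {u : ℝ} (hu : 0 ≤ u) : 0 ≤ fordQ u := by
  have := self_sub_one_le_mul_log hu
  unfold fordQ
  linarith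

lemma fordQ_monotoneOn : MonotoneOn fordQ (Set.Ici 1) := by
  intro y (hy : 1 ≤ y) x (hx : 1 ≤ x) hyx
  have hy0 : 0 < y := by linarith
  have hx0 : 0 < x := by linarith
  have hlog : x - y ≤ x * (log x - log y) := by
    have := one_sub_inv_le_log_of_pos (show 0 < x / y by positivity)
    rw [inv_div, log_div hx0.ne' hy0.ne'] at this
    calc x - y = x * (1 - y / x) := by field_simp
      _ ≤ x * (log x - log y) := by gcongr
  have := mul_nonneg (sub_nonneg.2 hyx) (log_nonneg hy)
  unfold fordQ
  nlinarith

lemma fordQ_add_fordQ_two_mul {a : ℝ} (ha : 0 < a) :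
    2 - 3 * (2 : ℝ) ^ (-(2 : ℝ) / 3) ≤ fordQ a + fordQ (2 * a) := by
  set g : ℝ := (2 : ℝ) ^ (-(2 : ℝ) / 3)
  have hg : 0 < g := by positivity
  set u := a / g
  have hau : a = g * u := (mul_div_cancel₀ a hg.ne').symm
  have hlog_g : log g = -(2 / 3) * log 2 := by
    rw [log_rpow two_pos]; ring
  have hsum : fordQ a + fordQ (2 * a) = 2 - 3 * g + 3 * g * fordQ u := by
    rw [fordQ, fordQ, fordQ, log_mul two_ne_zero ha.ne', hau,
      log_mul hg.ne' (by positivity), hlog_g]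
    ring
  have := mul_nonneg (by positivity : (0 : ℝ) ≤ 3 * g) (fordQ_nonneg (show 0 ≤ u by positivity))
  linarith

lemma two_sub_fordQ_add_fordQ_le {a b : ℝ} (ha : 1 ≤ 2 * a) (hab : 2 * a ≤ b) :
    (1 - fordQ a) + (1 - fordQ b) ≤ 3 * (2 : ℝ) ^ (-(2 : ℝ) / 3) := by
  have h2a := fordQ_monotoneOn (Set.mem_Ici.2 ha) (Set.mem_Ici.2 (ha.trans hab)) hab
  have := fordQ_add_fordQ_two_mul (show 0 < a by linarith)
  linarith

lemma pow_div_factorial_le_exp_fordQ {L : ℝ} (hL : 0 < L) (m : ℕ) :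
    L ^ m / m ! ≤ exp (L * (1 - fordQ (m / L))) := by
  rcases Nat.eq_zero_or_pos m with rfl | hm
  · simp [fordQ]
  have hm0 : (0 : ℝ) < m := by exact_mod_cast hm
  have hsplit : L ^ m / m ! = (m : ℝ) ^ m / m ! * exp (m * log (L / m)) := by
    rw [exp_nat_mul, exp_log (by positivity), div_pow]
    field_simp
  have hexp : L * (1 - fordQ (m / L)) = m + m * log (L / m) := by
    rw [fordQ, log_div hL.ne' hm0.ne', log_div hm0.ne' hL.ne']
    field_simp
    ring
  calc L ^ m / m ! = (m : ℝ) ^ m / m ! * exp (m * log (L / m)) := hsplit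
    _ ≤ exp m * exp (m * log (L / m)) := by
        gcongr
        exact pow_div_factorial_le_exp _ hm0.le m
    _ = exp (L * (1 - fordQ (m / L))) := by rw [hexp, exp_add]

lemma pow_div_factorial_mul_pow_div_factorial_le {L : ℝ} (hL : 0 < L) {p q : ℕ}
    (hp : L ≤ 2 * p) (hpq : 2 * (p : ℝ) ≤ q) :
    L ^ p / p ! * (L ^ q / q !) ≤ exp (3 * (2 : ℝ) ^ (-(2 : ℝ) / 3) * L) := by
  have hexp : L * (1 - fordQ (p / L)) + L * (1 - fordQ (q / L))
      ≤ 3 * (2 : ℝ) ^ (-(2 : ℝ) / 3) * L := by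
    have := two_sub_fordQ_add_fordQ_le (a := p / L) (b := q / L)
      (by rw [← mul_div_assoc, le_div_iff₀ hL]; linarith)
      (by rw [← mul_div_assoc]; gcongr)
    linarith [mul_le_mul_of_nonneg_left this hL.le]
  calc L ^ p / p ! * (L ^ q / q !)
      ≤ exp (L * (1 - fordQ (p / L))) * exp (L * (1 - fordQ (q / L))) :=
        mul_le_mul (pow_div_factorial_le_exp_fordQ hL p) (pow_div_factorial_le_exp_fordQ hL q)
          (by positivity) (exp_pos _).le
    _ ≤ exp (3 * (2 : ℝ) ^ (-(2 : ℝ) / 3) * L) := by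
        rw [← exp_add]
        exact exp_le_exp.2 hexp

lemma pow_succ_div_factorial_succ (L : ℝ) (m : ℕ) :
    L ^ (m + 1) / (m + 1)! = L / (m + 1) * (L ^ m / m !) := by
  rw [Nat.factorial_succ, pow_succ]
  push_cast
  field_simp

/-- There are `c > 0` and `N` such that for all `n ≥ N` and all integers `k, l` with
`0.55 log log n ≤ k`, `2k - 2 ≤ l` and `l ≤ 1.6 log log n`, one has
`((log log n)^{k-1}/(k-1)!) · ((log log n)^{l-1}/(l-1)!) ≤ c (log n)^{3 · 2^{-2/3}}`. -/
theorem loglog_pow_product_bound :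
    ∃ c : ℝ, 0 < c ∧ ∃ N : ℕ, ∀ n : ℕ, N ≤ n → ∀ k l : ℕ,
      (0.55 : ℝ) * Real.log (Real.log n) ≤ (k : ℝ) →
      2 * (k : ℝ) - 2 ≤ (l : ℝ) →
      (l : ℝ) ≤ (1.6 : ℝ) * Real.log (Real.log n) →
      (Real.log (Real.log n) ^ (k - 1) / (Nat.factorial (k - 1) : ℝ)) *
        (Real.log (Real.log n) ^ (l - 1) / (Nat.factorial (l - 1) : ℝ)) ≤
      c * Real.log n ^ ((3 : ℝ) * (2 : ℝ) ^ (-(2 : ℝ) / 3)) := by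
  refine ⟨2, two_pos, ⌈exp (exp 40)⌉₊, fun n hn k l hk hkl _ => ?_⟩
  have hn' : exp (exp 40) ≤ n := (Nat.le_ceil _).trans (by exact_mod_cast hn)
  have hlog_n : exp 40 ≤ log n := (le_log_iff_exp_le ((exp_pos _).trans_le hn')).2 hn'
  have hlog_n_pos : 0 < log n := (exp_pos _).trans_le hlog_n
  set L := log (log n)
  have hL : 40 ≤ L := (le_log_iff_exp_le hlog_n_pos).2 hlog_n
  have hk2 : 2 ≤ k := by exact_mod_cast (show (2 : ℝ) ≤ k by linarith)
  have hl1 : 1 ≤ l := by exact_mod_cast (show (1 : ℝ) ≤ l by linarith)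
  obtain ⟨p, rfl⟩ : ∃ p, k = p + 2 := ⟨k - 2, by omega⟩
  obtain ⟨q, rfl⟩ : ∃ q, l = q + 1 := ⟨l - 1, by omega⟩
  push_cast at hk hkl
  have hshift : L ^ (p + 1) / (p + 1)! ≤ 2 * (L ^ p / p !) := by
    rw [pow_succ_div_factorial_succ]
    gcongr
    rw [div_le_iff₀ (by positivity)]
    linarith
  calc L ^ (p + 2 - 1) / (p + 2 - 1)! * (L ^ (q + 1 - 1) / (q + 1 - 1)!)
      ≤ 2 * (L ^ p / p ! * (L ^ q / q !)) := by
        simp only [Nat.add_sub_cancel, show p + 2 - 1 = p + 1 by omega]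
        rw [← mul_assoc]
        gcongr
    _ ≤ 2 * exp (3 * (2 : ℝ) ^ (-(2 : ℝ) / 3) * L) := by
        gcongr
        exact pow_div_factorial_mul_pow_div_factorial_le (by linarith) (by linarith) (by linarith)
    _ = 2 * log n ^ ((3 : ℝ) * (2 : ℝ) ^ (-(2 : ℝ) / 3)) := by
        rw [rpow_def_of_pos hlog_n_pos, mul_comm L]
end
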